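/- arXiv:1103.0899 — 5 statements merged into one kernel-verified Lean document; each statement's English description precedes it below -/
import Mathlib

section
/- The ring C([-1,1]^n; ℝ) of continuous real-valued functions on the cube [-1,1]^n, with pointwise operations, is projective free. -/
/-!
A finitely generated projective module over `C(X, 𝕜)` is the range of an idempotent matrix `e`.
If `X` contracts to a point `x₀`, pulling `e` back along the contraction gives a continuous path
of idempotents from `e` to the constant matrix `e(x₀)`. In a Banach algebra, idempotents that are
close are conjugate, so `e` is conjugate to `e(x₀)`; over the field `𝕜` the latter factors as
`a * b` with `b * a = 1`, and so does `e`, which makes its range free.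
-/

/-- A commutative ring `R` is *projective free* if every finitely generated
projective `R`-module is free. -/
def ProjectiveFree (R : Type) [CommRing R] : Prop :=
  ∀ (M : Type) [AddCommGroup M] [Module R M],
    Module.Finite R M → Module.Projective R M → Module.Free R M

open Filter Topology ContinuousMap

namespace Matrix

variable {R S : Type*} [CommRing R] [CommRing S] {k : ℕ}

/-- `e = a * b` with `b * a = 1` exhibits the range of `e` as free of rank `r`. -/
def SplitsFreely (e : Matrix (Fin k) (Fin k) R) : Prop :=
  ∃ (r : ℕ) (a : Matrix (Fin k) (Fin r) R) (b : Matrix (Fin r) (Fin k) R), a * b = e ∧ b * a = 1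

theorem SplitsFreely.map {e : Matrix (Fin k) (Fin k) R} (he : e.SplitsFreely) (f : R →+* S) :
    (e.map f).SplitsFreely := by
  obtain ⟨r, a, b, hab, hba⟩ := he
  refine ⟨r, a.map f, b.map f, ?_, ?_⟩
  · rw [← Matrix.map_mul, hab]
  · rw [← Matrix.map_mul, hba, Matrix.map_one f (map_zero f) (map_one f)]

theorem SplitsFreely.of_isConj {e f : Matrix (Fin k) (Fin k) R} (he : e.SplitsFreely)
    (hef : IsConj e f) : f.SplitsFreely := by
  obtain ⟨r, a, b, hab, hba⟩ := he
  obtain ⟨u, hu⟩ := hef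
  refine ⟨r, (u : Matrix (Fin k) (Fin k) R) * a, b * (↑u⁻¹ : Matrix (Fin k) (Fin k) R), ?_, ?_⟩
  · rw [← Matrix.mul_assoc, Matrix.mul_assoc _ a, hab, hu.eq, mul_assoc, Units.mul_inv, mul_one]
  · rw [Matrix.mul_assoc, ← Matrix.mul_assoc _ (u : Matrix (Fin k) (Fin k) R), Units.inv_mul,
      Matrix.one_mul, hba]

theorem splitsFreely_of_isIdempotentElem {K : Type*} [Field K] {e : Matrix (Fin k) (Fin k) K}
    (he : IsIdempotentElem e) : e.SplitsFreely := by
  set f := toLin' e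
  have hf : IsIdempotentElem f := he.map toLinAlgEquiv'
  set φ := (Module.finBasis K (LinearMap.range f)).equivFun
  refine ⟨_, LinearMap.toMatrix' ((LinearMap.range f).subtype ∘ₗ φ.symm.toLinearMap),
    LinearMap.toMatrix' (φ.toLinearMap ∘ₗ f.rangeRestrict), ?_, ?_⟩
  · rw [← LinearMap.toMatrix'_comp, LinearMap.comp_assoc, ← LinearMap.comp_assoc _ φ.toLinearMap,
      LinearEquiv.symm_comp, LinearMap.id_comp]
    exact LinearMap.toMatrix'_toLin' e
  · have : f.rangeRestrict ∘ₗ (LinearMap.range f).subtype = LinearMap.id := by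
      ext ⟨x, hx⟩ : 1
      exact Subtype.ext ((LinearMap.IsIdempotentElem.mem_range_iff hf).mp hx)
    rw [← LinearMap.toMatrix'_comp, LinearMap.comp_assoc, ← LinearMap.comp_assoc φ.symm.toLinearMap,
      this, LinearMap.id_comp, LinearEquiv.comp_symm, LinearMap.toMatrix'_id]

end Matrix

open Matrix in
theorem projectiveFree_of_forall_splitsFreely {R : Type} [CommRing R]
    (h : ∀ (k : ℕ) (e : Matrix (Fin k) (Fin k) R), IsIdempotentElem e → e.SplitsFreely) :
    ProjectiveFree R := by
  intro M _ _ _ _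
  obtain ⟨k, g, hg⟩ := Module.Finite.exists_fin' R M
  obtain ⟨s, hgs⟩ := Module.projective_lifting_property g LinearMap.id hg
  have hp : IsIdempotentElem (s ∘ₗ g) :=
    LinearMap.ext fun x ↦ congrArg s (LinearMap.congr_fun hgs (g x))
  obtain ⟨r, a, b, hab, hba⟩ :=
    h k (LinearMap.toMatrix' (s ∘ₗ g)) (hp.map LinearMap.toMatrixAlgEquiv')
  have hab' : toLin' a ∘ₗ toLin' b = s ∘ₗ g := by
    rw [← toLin'_mul, hab]
    exact toLin'_toMatrix' _
  have hba' : toLin' b ∘ₗ toLin' a = LinearMap.id := by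
    rw [← toLin'_mul, hba, toLin'_one]
  refine Module.Free.of_equiv (LinearEquiv.ofLinearMap (g ∘ₗ toLin' a) (toLin' b ∘ₗ s) ?_ ?_)
  · calc (g ∘ₗ toLin' a) ∘ₗ (toLin' b ∘ₗ s) = g ∘ₗ (toLin' a ∘ₗ toLin' b) ∘ₗ s := by
          simp only [LinearMap.comp_assoc]
      _ = (g ∘ₗ s) ∘ₗ (g ∘ₗ s) := by rw [hab']; simp only [LinearMap.comp_assoc]
      _ = LinearMap.id := by rw [hgs, LinearMap.id_comp]
  · calc (toLin' b ∘ₗ s) ∘ₗ (g ∘ₗ toLin' a) = toLin' b ∘ₗ (s ∘ₗ g) ∘ₗ toLin' a := by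
          simp only [LinearMap.comp_assoc]
      _ = (toLin' b ∘ₗ toLin' a) ∘ₗ (toLin' b ∘ₗ toLin' a) := by
          rw [← hab']; simp only [LinearMap.comp_assoc]
      _ = LinearMap.id := by rw [hba', LinearMap.id_comp]

section NormedRing

variable {A : Type*} [NormedRing A] [CompleteSpace A]

theorem IsIdempotentElem.isConj_of_norm_lt_one {e f : A} (he : IsIdempotentElem e)
    (hf : IsIdempotentElem f) (h : ‖(2 * f - 1) * (e - f)‖ < 1) : IsConj e f := by
  -- The unit `u = 1 + (2f - 1)(e - f)` satisfies `u * e = f * e = f * u`.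
  refine ⟨Units.oneSub _ (by rwa [norm_neg]), ?_⟩
  show (1 - -((2 * f - 1) * (e - f))) * e = f * (1 - -((2 * f - 1) * (e - f)))
  have hue : (1 - -((2 * f - 1) * (e - f))) * e = f * e :=
    calc _ = e + 2 * (f * (e * e)) - 2 * (f * f * e) - e * e + f * e := by noncomm_ring
      _ = f * e := by simp only [he.eq, hf.eq]; noncomm_ring
  have hfu : f * (1 - -((2 * f - 1) * (e - f))) = f * e :=
    calc _ = f + 2 * (f * f * e) - 2 * (f * f * f) - f * e + f * f := by noncomm_ring
      _ = f * e := by simp only [hf.eq]; noncomm_ring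
  rw [hue, hfu]

theorem Continuous.isConj_of_isIdempotentElem {T : Type*} [TopologicalSpace T]
    [PreconnectedSpace T] {γ : T → A} (hγ : Continuous γ) (hidem : ∀ t, IsIdempotentElem (γ t))
    (s t : T) : IsConj (γ s) (γ t) := by
  refine PreconnectedSpace.induction₂' (fun s t ↦ IsConj (γ s) (γ t)) (fun s ↦ ?_)
    ⟨fun _ _ _ ↦ IsConj.trans⟩ s t
  have hlim : Tendsto (fun t ↦ ‖(2 * γ s - 1) * (γ t - γ s)‖) (𝓝 s) (𝓝 0) := by
    have : Continuous fun t ↦ ‖(2 * γ s - 1) * (γ t - γ s)‖ := by fun_prop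
    simpa using this.tendsto s
  filter_upwards [hlim.eventually_lt_const one_pos] with t ht
  have := (hidem t).isConj_of_norm_lt_one (hidem s) ht
  exact ⟨this.symm, this⟩

end NormedRing

instance ContractibleSpace.pi {ι : Type*} {X : ι → Type*} [∀ i, TopologicalSpace (X i)]
    [∀ i, ContractibleSpace (X i)] : ContractibleSpace (∀ i, X i) :=
  (HomotopyEquiv.piCongrRight fun i ↦ (ContractibleSpace.hequiv_unit (X i)).some).contractibleSpace

section ContinuousMap

variable {X Y 𝕜 : Type*} [TopologicalSpace X] [CompactSpace X] [TopologicalSpace Y]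
  [NormedField 𝕜] [CompleteSpace 𝕜] {k : ℕ}

attribute [local instance] Matrix.linftyOpNormedRing

theorem ContinuousMap.Homotopic.isConj_map_compRightAlgHom {φ₀ φ₁ : C(X, Y)}
    (h : φ₀.Homotopic φ₁) {e : Matrix (Fin k) (Fin k) C(Y, 𝕜)} (he : IsIdempotentElem e) :
    IsConj (e.map (compRightAlgHom 𝕜 𝕜 φ₀)) (e.map (compRightAlgHom 𝕜 𝕜 φ₁)) := by
  obtain ⟨H⟩ := h
  -- The `linftyOp` uniformity is the product uniformity only up to unfolding.
  have : @CompleteSpace (Matrix (Fin k) (Fin k) C(X, 𝕜)) PseudoMetricSpace.toUniformSpace :=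
    inferInstanceAs (CompleteSpace (Matrix (Fin k) (Fin k) C(X, 𝕜)))
  have hγ : Continuous fun t ↦ e.map (compRightAlgHom 𝕜 𝕜 (H.curry t)) :=
    continuous_pi fun i ↦ continuous_pi fun j ↦
      (continuous_postcomp (e i j)).comp H.curry.continuous
  simpa using hγ.isConj_of_isIdempotentElem
    (fun t ↦ he.map (compRightAlgHom 𝕜 𝕜 (H.curry t)).mapMatrix) 0 1

end ContinuousMap

theorem ContinuousMap.projectiveFree {X 𝕜 : Type} [TopologicalSpace X] [CompactSpace X]
    [ContractibleSpace X] [NormedField 𝕜] [CompleteSpace 𝕜] : ProjectiveFree C(X, 𝕜) := by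
  refine projectiveFree_of_forall_splitsFreely fun k e he ↦ ?_
  obtain ⟨x₀, hx₀⟩ := id_nullhomotopic X
  have hconst : (e.map (compRightAlgHom 𝕜 𝕜 (const X x₀))).SplitsFreely := by
    have hm := he.map (evalAlgHom 𝕜 𝕜 x₀).mapMatrix
    convert (Matrix.splitsFreely_of_isIdempotentElem hm).map (algebraMap 𝕜 C(X, 𝕜)) using 1
    ext i j x
    rfl
  have hid : e.map (compRightAlgHom 𝕜 𝕜 (ContinuousMap.id X)) = e := rfl
  simpa only [hid] using hconst.of_isConj (hx₀.isConj_map_compRightAlgHom he).symm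

/-- The ring `C([-1,1]^n; ℝ)` of continuous real-valued functions on the cube
`[-1,1]^n`, with pointwise operations, is projective free. -/
theorem projectiveFree_continuousMap_cube (n : ℕ) :
    ProjectiveFree C((Fin n → (Set.Icc (-1 : ℝ) 1)), ℝ) :=
  have : ContractibleSpace (Set.Icc (-1 : ℝ) 1) :=
    (convex_Icc _ _).contractibleSpace (Set.nonempty_Icc.2 (by norm_num))
  ContinuousMap.projectiveFree
end

section
/- The ring C_r(cl(𝔻)^n; ℂ) = {f : cl(𝔻)^n → ℂ : f continuous and f(z) = conj(f(conj(z))) for all z ∈ cl(𝔻)^n} of real symmetric continuous functions on the closed polydisc, with pointwise operations, is projective free. -/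
/-- The closed unit polydisc in `ℂⁿ`, as a type. -/
def ClosedPolydisc (n : ℕ) : Type := { z : Fin n → ℂ // ∀ j, ‖z j‖ ≤ 1 }

noncomputable instance (n : ℕ) : TopologicalSpace (ClosedPolydisc n) :=
  instTopologicalSpaceSubtype

/-- Componentwise complex conjugation on the closed polydisc. -/
def polyConj {n : ℕ} (z : ClosedPolydisc n) : ClosedPolydisc n :=
  ⟨fun j => starRingEnd ℂ (z.1 j), fun j => by
    simpa using z.2 j⟩

/-- The real symmetric continuous functions on the closed polydisc, as a subring of
`C(cl(𝔻)ⁿ, ℂ)`. -/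
noncomputable def realSymmC (n : ℕ) : Subring C(ClosedPolydisc n, ℂ) where
  carrier := { f | ∀ z, f z = starRingEnd ℂ (f (polyConj z)) }
  mul_mem' := by
    intro f g hf hg z
    simp only [ContinuousMap.mul_apply, map_mul]
    rw [hf z, hg z]
  one_mem' := by intro z; simp
  add_mem' := by
    intro f g hf hg z
    simp only [ContinuousMap.add_apply, map_add]
    rw [hf z, hg z]
  zero_mem' := by intro z; simp
  neg_mem' := by
    intro f hf z
    simp only [ContinuousMap.neg_apply, map_neg]
    rw [hf z]


/-!
A finitely generated projective module over `R = C_r(cl(𝔻)ⁿ; ℂ)` is the range of an idempotent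
matrix `e` over `R`. The contraction `z ↦ (1 - t) z` of the polydisc commutes with conjugation, so
precomposing with it deforms `e` continuously, through idempotents, into a constant matrix with
real entries. Nearby idempotents `p`, `q` are conjugate by `1 + (q - p)(2p - 1)`, which is close to
`1` and hence a unit because `R` is a Banach algebra; so `e` is conjugate to the real idempotent.
Over `ℝ` an idempotent factors as `A * B` with `B * A = 1`, so its range over `R` is free.
-/

open LinearMap Matrix Topology

section Retract

variable {R M N : Type*} [Semiring R] [AddCommMonoid M] [Module R M] [AddCommMonoid N] [Module R N]

noncomputable def LinearMap.equivRangeOfLeftInverse {π : N →ₗ[R] M} {s : M →ₗ[R] N}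
    (h : π ∘ₗ s = LinearMap.id) : M ≃ₗ[R] range (s ∘ₗ π) :=
  (LinearEquiv.ofLeftInverse (g := π) fun m => congr($h m)).trans <| LinearEquiv.ofEq _ _
    (range_comp_of_range_eq_top s (range_eq_top.mpr fun m => ⟨s m, congr($h m)⟩)).symm

end Retract

section IdempotentMatrix

variable {R : Type*} [CommRing R]

theorem Module.exists_isIdempotentElem_linearEquiv_range (M : Type*) [AddCommGroup M]
    [Module R M] [Module.Finite R M] [Module.Projective R M] :
    ∃ (k : ℕ) (e : Matrix (Fin k) (Fin k) R), IsIdempotentElem e ∧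
      Nonempty (M ≃ₗ[R] range e.mulVecLin) := by
  obtain ⟨k, π, hπ⟩ := Module.Finite.exists_fin' R M
  obtain ⟨s, hs⟩ := π.exists_rightInverse_of_surjective (range_eq_top.mpr hπ)
  refine ⟨k, toMatrix' (s ∘ₗ π), ?_, ⟨?_⟩⟩
  · rw [IsIdempotentElem, ← toMatrix'_comp, comp_assoc, ← comp_assoc π, hs, id_comp]
  · rw [← Matrix.toLin'_apply', Matrix.toLin'_toMatrix']
    exact equivRangeOfLeftInverse hs

variable {m n : Type*} [Fintype m] [Fintype n] [DecidableEq n]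

theorem Matrix.nonempty_linearEquiv_range_of_isConj {e f : Matrix n n R} (h : IsConj e f) :
    Nonempty (range e.mulVecLin ≃ₗ[R] range f.mulVecLin) := by
  obtain ⟨u, hu⟩ := h
  have hinj : Function.Injective (u : Matrix n n R).mulVecLin := fun x y hxy => by
    simpa [Matrix.mulVec_mulVec] using congr(((u⁻¹ : (Matrix n n R)ˣ) : Matrix n n R) *ᵥ $hxy)
  have hsurj : range (u : Matrix n n R).mulVecLin = ⊤ := range_eq_top.mpr fun x =>
    ⟨((u⁻¹ : (Matrix n n R)ˣ) : Matrix n n R) *ᵥ x, by simp⟩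
  have hrange : (range e.mulVecLin).map (u : Matrix n n R).mulVecLin = range f.mulVecLin := by
    rw [← range_comp_of_range_eq_top f.mulVecLin hsurj, ← Matrix.mulVecLin_mul, ← hu.eq,
      Matrix.mulVecLin_mul, range_comp]
  exact ⟨(Submodule.equivMapOfInjective _ hinj _).trans (LinearEquiv.ofEq _ _ hrange)⟩

theorem Matrix.free_range_mulVecLin_mul {A : Matrix m n R} {B : Matrix n m R} (h : B * A = 1) :
    Module.Free R (range (A * B).mulVecLin) := by
  rw [Matrix.mulVecLin_mul]
  refine Module.Free.of_equiv (equivRangeOfLeftInverse ?_)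
  rw [← Matrix.mulVecLin_mul, h, Matrix.mulVecLin_one]

theorem Matrix.exists_mul_eq_one_of_isIdempotentElem {K : Type*} [Field K] [DecidableEq m]
    {F : Matrix m m K} (hF : IsIdempotentElem F) :
    ∃ (r : ℕ) (A : Matrix m (Fin r) K) (B : Matrix (Fin r) m K), B * A = 1 ∧ A * B = F := by
  set V := range F.mulVecLin
  let b := (Module.finBasis K V).equivFun
  have hFV : ∀ v : V, F *ᵥ v = v := fun ⟨_, x, hx⟩ => by
    simp only [← hx, Matrix.mulVecLin_apply, Matrix.mulVec_mulVec, hF.eq]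
  refine ⟨_, toMatrix' (V.subtype ∘ₗ b.symm.toLinearMap),
    toMatrix' (b.toLinearMap ∘ₗ F.mulVecLin.rangeRestrict), ?_, ?_⟩
  · rw [← toMatrix'_comp, ← toMatrix'_id]
    refine congr_arg _ (LinearMap.ext fun y => ?_)
    have : F.mulVecLin.rangeRestrict (b.symm y) = b.symm y := Subtype.ext (hFV _)
    simp [this]
  · conv_rhs => rw [← LinearMap.toMatrix'_toLin' F, Matrix.toLin'_apply']
    rw [← toMatrix'_comp]
    refine congr_arg _ (LinearMap.ext fun x => ?_)
    simp

theorem Matrix.free_range_mulVecLin_map {K S : Type*} [Field K] [CommRing S] (c : K →+* S)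
    [DecidableEq m] {F : Matrix m m K} (hF : IsIdempotentElem F) :
    Module.Free S (range (F.map c).mulVecLin) := by
  obtain ⟨r, A, B, hBA, rfl⟩ := Matrix.exists_mul_eq_one_of_isIdempotentElem hF
  rw [Matrix.map_mul]
  refine Matrix.free_range_mulVecLin_mul ?_
  rw [← Matrix.map_mul, hBA, Matrix.map_one _ c.map_zero c.map_one]

end IdempotentMatrix

section IdempotentPath

variable {A : Type*} [Ring A]

theorem IsIdempotentElem.semiconjBy {e f : A} (he : IsIdempotentElem e)
    (hf : IsIdempotentElem f) : SemiconjBy (1 + (f - e) * (2 * e - 1)) e f := by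
  have hfe : f * (f * e) = f * e := by rw [← mul_assoc, hf.eq]
  simp only [SemiconjBy, add_mul, mul_add, sub_mul, mul_sub, one_mul, mul_one, mul_assoc,
    he.eq, hf.eq, hfe, two_mul]
  abel

variable [TopologicalSpace A] [IsTopologicalRing A]

theorem isConj_of_continuous_isIdempotentElem (hA : {x : A | IsUnit x} ∈ 𝓝 1) {X : Type*}
    [TopologicalSpace X] [PreconnectedSpace X] {E : X → A} (hE : Continuous E)
    (hidem : ∀ t, IsIdempotentElem (E t)) (a b : X) : IsConj (E a) (E b) := by
  have near : ∀ x, ∀ᶠ y in 𝓝 x, IsConj (E x) (E y) := fun x => by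
    have hu : Filter.Tendsto (fun y => 1 + (E y - E x) * (2 * E x - 1)) (𝓝 x) (𝓝 1) := by
      simpa using (((hE.tendsto x).sub_const (E x)).mul_const (2 * E x - 1)).const_add 1
    filter_upwards [hu hA] with y hy
    exact ⟨hy.unit, (hidem x).semiconjBy (hidem y)⟩
  refine PreconnectedSpace.induction₂' (fun s t => IsConj (E s) (E t)) (fun x => ?_)
    ⟨fun _ _ _ => IsConj.trans⟩ a b
  filter_upwards [near x] with y hy using ⟨hy, hy.symm⟩

end IdempotentPath

theorem Matrix.setOf_isUnit_mem_nhds_one {R n : Type*} [CommRing R] [TopologicalSpace R]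
    [IsTopologicalRing R] [Fintype n] [DecidableEq n] (h : {x : R | IsUnit x} ∈ 𝓝 1) :
    {M : Matrix n n R | IsUnit M} ∈ 𝓝 1 := by
  simp_rw [Matrix.isUnit_iff_isUnit_det]
  exact (continuous_id.matrix_det.tendsto' 1 1 Matrix.det_one) h

/-- `realSymmC n` is definitionally `realSymm polyConj`. -/
def realSymm {X : Type*} [TopologicalSpace X] (σ : X → X) : Subring C(X, ℂ) where
  carrier := { f | ∀ z, f z = starRingEnd ℂ (f (σ z)) }
  mul_mem' {f g} hf hg z := by simp only [ContinuousMap.mul_apply, map_mul, ← hf z, ← hg z]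
  one_mem' z := by simp
  add_mem' {f g} hf hg z := by simp only [ContinuousMap.add_apply, map_add, ← hf z, ← hg z]
  zero_mem' z := by simp
  neg_mem' {f} hf z := by simp only [ContinuousMap.neg_apply, map_neg, ← hf z]

namespace realSymm

section

variable {X : Type*} [TopologicalSpace X] (σ : X → X)

theorem isClosed : IsClosed (realSymm σ : Set C(X, ℂ)) := by
  have : (realSymm σ : Set C(X, ℂ)) = ⋂ z, {f | f z = starRingEnd ℂ (f (σ z))} :=
    Set.ext fun _ => by rw [Set.mem_iInter]; rfl
  rw [this]
  exact isClosed_iInter fun z => isClosed_eq (continuous_eval_const z)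
    (Complex.continuous_conj.comp (continuous_eval_const (σ z)))

instance [CompactSpace X] : CompleteSpace (realSymm σ) := (isClosed σ).completeSpace_coe

theorem setOf_isUnit_mem_nhds_one [CompactSpace X] : {f : realSymm σ | IsUnit f} ∈ 𝓝 1 :=
  Units.isOpen.mem_nhds isUnit_one

noncomputable def ofReal : ℝ →+* realSymm σ :=
  (algebraMap ℝ C(X, ℂ)).codRestrict _ fun r z => by simp [Complex.conj_ofReal]

theorem im_apply_eq_zero {x₀ : X} (hx₀ : σ x₀ = x₀) (f : realSymm σ) : (f.1 x₀).im = 0 := by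
  have h := f.2 x₀
  rw [hx₀] at h
  exact Complex.conj_eq_iff_im.mp h.symm

noncomputable def evalRe {x₀ : X} (hx₀ : σ x₀ = x₀) : realSymm σ →+* ℝ where
  toFun f := (f.1 x₀).re
  map_one' := by simp
  map_mul' f g := by simp [Complex.mul_re, im_apply_eq_zero σ hx₀]
  map_zero' := by simp
  map_add' f g := by simp

theorem ofReal_evalRe {x₀ : X} (hx₀ : σ x₀ = x₀) (f : realSymm σ) (x : X) :
    (ofReal σ (evalRe σ hx₀ f)).1 x = f.1 x₀ :=
  Complex.ext rfl (im_apply_eq_zero σ hx₀ f).symm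

noncomputable def precomp (g : C(X, X)) (hg : ∀ x, σ (g x) = g (σ x)) :
    realSymm σ →+* realSymm σ :=
  (ContinuousMap.compRightAlgHom ℂ ℂ g).toRingHom.restrict _ _ fun f hf x => by
    simp [hf (g x), hg]

theorem continuous_precomp_curry {g₀ g₁ : C(X, X)}
    (F : g₀.Homotopy g₁) (hF : ∀ t x, σ (F (t, x)) = F (t, σ x)) (f : realSymm σ) :
    Continuous fun t => precomp σ (F.curry t) (hF t) f :=
  ((f.1.comp F.toContinuousMap).curry.continuous).subtype_mk _

end

theorem projectiveFree {X : Type} [TopologicalSpace X] [CompactSpace X] (σ : X → X) {x₀ : X}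
    (F : (ContinuousMap.id X).Homotopy (.const X x₀)) (hF : ∀ t x, σ (F (t, x)) = F (t, σ x)) :
    ProjectiveFree (realSymm σ) := by
  intro M _ _ _ _
  obtain ⟨k, e, he, ⟨eM⟩⟩ := Module.exists_isIdempotentElem_linearEquiv_range (R := realSymm σ) M
  have hx₀ : σ x₀ = x₀ := by simpa using hF 1 x₀
  let E : unitInterval → Matrix (Fin k) (Fin k) (realSymm σ) := fun t =>
    (precomp σ (F.curry t) (hF t)).mapMatrix e
  have hE0 : E 0 = e := by ext i j x; simp [E, precomp]
  have hE1 : E 1 = (e.map (evalRe σ hx₀)).map (ofReal σ) := by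
    ext i j x; simp [E, precomp, ofReal_evalRe]
  have hconj : IsConj (E 0) (E 1) := isConj_of_continuous_isIdempotentElem
    (Matrix.setOf_isUnit_mem_nhds_one (setOf_isUnit_mem_nhds_one σ))
    (continuous_matrix fun i j => continuous_precomp_curry σ F hF (e i j))
    (fun t => he.map (precomp σ (F.curry t) (hF t)).mapMatrix) 0 1
  rw [hE0, hE1] at hconj
  obtain ⟨eC⟩ := Matrix.nonempty_linearEquiv_range_of_isConj hconj
  have hfree := Matrix.free_range_mulVecLin_map (ofReal σ) (he.map (evalRe σ hx₀).mapMatrix)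
  exact hfree.of_equiv' (eM.trans eC).symm

end realSymm

namespace ClosedPolydisc

instance (n : ℕ) : CompactSpace (ClosedPolydisc n) := by
  have h : IsCompact {z : Fin n → ℂ | ∀ j, ‖z j‖ ≤ 1} := by
    simpa [Set.pi, Metric.closedBall] using
      isCompact_univ_pi fun _ : Fin n => isCompact_closedBall (0 : ℂ) 1
  exact isCompact_iff_compactSpace.mp h

def origin (n : ℕ) : ClosedPolydisc n := ⟨0, fun _ => by simp⟩

noncomputable def contraction (n : ℕ) :
    (ContinuousMap.id (ClosedPolydisc n)).Homotopy (.const _ (origin n)) where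
  toFun p := ⟨fun j => ((unitInterval.symm p.1 : ℝ) : ℂ) * p.2.1 j, fun j => by
    rw [norm_mul, Complex.norm_real, Real.norm_of_nonneg (unitInterval.nonneg _)]
    exact mul_le_one₀ (unitInterval.le_one _) (norm_nonneg _) (p.2.2 j)⟩
  continuous_toFun := (continuous_pi fun j =>
    (Complex.continuous_ofReal.comp (continuous_subtype_val.comp (unitInterval.continuous_symm.comp
      continuous_fst))).mul ((continuous_apply j).comp (continuous_subtype_val.comp
        continuous_snd))).subtype_mk _
  map_zero_left z := Subtype.ext <| funext fun j => by simp
  map_one_left z := Subtype.ext <| funext fun j => by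
    simp only [unitInterval.symm_one, Set.Icc.coe_zero, Complex.ofReal_zero, zero_mul]; rfl

theorem polyConj_contraction (n : ℕ) (t : unitInterval) (z : ClosedPolydisc n) :
    polyConj (contraction n (t, z)) = contraction n (t, polyConj z) :=
  Subtype.ext <| funext fun j => by
    change starRingEnd ℂ (((unitInterval.symm t : ℝ) : ℂ) * z.1 j) =
      ((unitInterval.symm t : ℝ) : ℂ) * starRingEnd ℂ (z.1 j)
    simp [Complex.conj_ofReal]

end ClosedPolydisc

/-- The ring `C_r(cl(𝔻)ⁿ; ℂ)` of real symmetric continuous functions on the closed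
polydisc is projective free. -/
theorem projectiveFree_realSymmC (n : ℕ) : ProjectiveFree (realSymmC n) :=
  realSymm.projectiveFree polyConj (ClosedPolydisc.contraction n)
    (ClosedPolydisc.polyConj_contraction n)
end

section
/- Every continuous idempotent matrix-valued function P on a compact contractible metric space X (i.e. P : X → ℂ^{m×m} continuous with P(x)² = P(x) for all x) is conjugate to a constant diagonal idempotent: there exists a continuous map S : X → GL_m(ℂ) and k ≥ 0 such that S(x)⁻¹ P(x) S(x) = diag(I_k, 0) for all x ∈ X. -/
/-- The `m × m` diagonal matrix with `k` ones followed by zeros on the diagonal. -/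
def diagIdem (m k : ℕ) : Matrix (Fin m) (Fin m) ℂ :=
  Matrix.of fun i j => if i = j ∧ (i : ℕ) < k then 1 else 0

/-!
Idempotents `p`, `q` of a Banach algebra are conjugate by `u = q p + (1 - q)(1 - p)`, since
`u p = q p = q u`, and `u = 1 - (p - q)(2p - 1)` is a unit as soon as `q` is close to `p`.
So along a continuous path of idempotents the conjugacy class is locally constant, hence constant.
In the Banach algebra `C(X, Mₘ(ℂ))`, a contraction of `X` turns `P` into a path of idempotents
from `P` to the constant `P x₀`, and `P x₀` is conjugate to `diag(I_k, 0)` in a basis adapted to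
its range and kernel.
-/

open Filter Topology Module LinearMap

section Ring

variable {R : Type*} [Ring R] {p q : R}

def idemIntertwiner (p q : R) : R := q * p + (1 - q) * (1 - p)

lemma semiconjBy_idemIntertwiner (hp : IsIdempotentElem p) (hq : IsIdempotentElem q) :
    SemiconjBy (idemIntertwiner p q) p q := by
  have hpp : (1 - p) * p = 0 := by rw [sub_mul, one_mul, hp.eq, sub_self]
  have hqq : q * (1 - q) = 0 := by rw [mul_sub, mul_one, hq.eq, sub_self]
  calc idemIntertwiner p q * p = q * p := by
        rw [idemIntertwiner, add_mul, mul_assoc, hp.eq, mul_assoc, hpp, mul_zero, add_zero]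
    _ = q * idemIntertwiner p q := by
        rw [idemIntertwiner, mul_add, ← mul_assoc, hq.eq, ← mul_assoc, hqq, zero_mul, add_zero]

lemma IsIdempotentElem.idemIntertwiner_eq (hp : IsIdempotentElem p) (q : R) :
    idemIntertwiner p q = 1 - (p - q) * (2 * p - 1) := by
  have : (p - q) * (2 * p - 1) = 2 * (p * p) - p - 2 * (q * p) + q := by noncomm_ring
  rw [idemIntertwiner, this, hp.eq]
  noncomm_ring

end Ring

section NormedRing

variable {R : Type*} [NormedRing R] [CompleteSpace R]

lemma IsIdempotentElem.eventually_isConj {p : R} (hp : IsIdempotentElem p) :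
    ∀ᶠ q in 𝓝 p, IsIdempotentElem q → IsConj p q := by
  have hsmall : Tendsto (fun q => ‖p - q‖ * ‖2 * p - 1‖) (𝓝 p) (𝓝 0) := by
    have hcont : Continuous fun q : R => ‖p - q‖ * ‖2 * p - 1‖ := by fun_prop
    simpa using hcont.tendsto p
  filter_upwards [hsmall.eventually (gt_mem_nhds one_pos)] with q hq hqi
  have hunit : IsUnit (idemIntertwiner p q) := by
    rw [hp.idemIntertwiner_eq]
    exact isUnit_one_sub_of_norm_lt_one ((norm_mul_le _ _).trans_lt hq)
  exact ⟨hunit.unit, semiconjBy_idemIntertwiner hp hqi⟩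

theorem isConj_of_continuous_of_isIdempotentElem {Y : Type*} [TopologicalSpace Y]
    [PreconnectedSpace Y] {γ : Y → R} (hγ : Continuous γ)
    (hidem : ∀ y, IsIdempotentElem (γ y)) (a b : Y) : IsConj (γ a) (γ b) := by
  refine PreconnectedSpace.induction₂' (fun a b => IsConj (γ a) (γ b)) (fun a => ?_)
    ⟨fun _ _ _ => IsConj.trans⟩ a b
  filter_upwards [(hγ.tendsto a).eventually (hidem a).eventually_isConj] with b hb
  exact ⟨hb (hidem b), (hb (hidem b)).symm⟩

end NormedRing

theorem IsIdempotentElem.exists_basis_apply_eq_ite {K V : Type*} [Field K] [AddCommGroup V]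
    [Module K V] [FiniteDimensional K V] {f : Module.End K V} (hf : IsIdempotentElem f) {n : ℕ}
    (hn : finrank K V = n) :
    ∃ k ≤ n, ∃ b : Basis (Fin n) K V, ∀ j, f (b j) = if (j : ℕ) < k then b j else 0 := by
  set k := finrank K (range f)
  set l := finrank K (ker f)
  have hkl : k + l = n := hn ▸ Submodule.finrank_add_eq_of_isCompl hf.isCompl
  let b : Basis (Fin k ⊕ Fin l) K V :=
    ((finBasis K _).prod (finBasis K _)).map (Submodule.prodEquivOfIsCompl _ _ hf.isCompl)
  have hrange : ∀ a, f (b (.inl a)) = b (.inl a) := fun a =>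
    hf.mem_range_iff.mp (by simp [b])
  have hker : ∀ a, f (b (.inr a)) = 0 := fun a => by simp [b]
  refine ⟨k, by omega, b.reindex (finSumFinEquiv.trans (finCongr hkl)), fun j => ?_⟩
  obtain ⟨i | i, rfl⟩ := (finSumFinEquiv.trans (finCongr hkl)).surjective j
  · simp [hrange]
  · simp [hker]

theorem Matrix.exists_isConj_diagIdem {m : ℕ} {e : Matrix (Fin m) (Fin m) ℂ}
    (he : IsIdempotentElem e) : ∃ k ≤ m, IsConj (diagIdem m k) e := by
  obtain ⟨k, hkm, b, hb⟩ :=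
    (he.map Matrix.toLinAlgEquiv').exists_basis_apply_eq_ite (finrank_fin_fun ℂ)
  have hdiag : LinearMap.toMatrix b b (Matrix.toLin' e) = diagIdem m k := by
    ext i j
    rw [LinearMap.toMatrix_apply]
    simp only [diagIdem, Matrix.of_apply]
    rw [show Matrix.toLin' e (b j) = _ from hb j]
    by_cases hj : (j : ℕ) < k <;> by_cases hij : i = j <;> simp [hj, hij]
  set std := Pi.basisFun ℂ (Fin m)
  have hchange := basis_toMatrix_mul_linearMap_toMatrix_mul_basis_toMatrix std b std b
    (Matrix.toLin' e)
  rw [hdiag, LinearMap.toMatrix_eq_toMatrix', LinearMap.toMatrix'_toLin'] at hchange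
  refine ⟨k, hkm, ⟨⟨std.toMatrix b, b.toMatrix std, std.toMatrix_mul_toMatrix_flip b,
    b.toMatrix_mul_toMatrix_flip std⟩, ?_⟩⟩
  rw [SemiconjBy, ← hchange, Matrix.mul_assoc _ (b.toMatrix std),
    b.toMatrix_mul_toMatrix_flip std, Matrix.mul_one]

theorem ContinuousMap.isConj_const {X M : Type*} [TopologicalSpace X] [TopologicalSpace M]
    [Monoid M] [ContinuousMul M] {a b : M} (h : IsConj a b) :
    IsConj (const X a) (const X b) := by
  obtain ⟨c, hc⟩ := h
  exact ⟨⟨const X c, const X ↑c⁻¹, by ext; simp, by ext; simp⟩,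
    by ext; exact congr($hc.eq)⟩

theorem ContinuousMap.exists_isConj_const_of_isIdempotentElem {X R : Type*} [TopologicalSpace X]
    [CompactSpace X] [ContractibleSpace X] [NormedRing R] [CompleteSpace R] (P : C(X, R))
    (hP : ∀ x, IsIdempotentElem (P x)) : ∃ x₀, IsConj (const X (P x₀)) P := by
  obtain ⟨x₀, ⟨H⟩⟩ := id_nullhomotopic X
  let γ := (P.comp H.toContinuousMap).curry
  have hγ : IsConj (γ 1) (γ 0) := isConj_of_continuous_of_isIdempotentElem (γ := ⇑γ)
    γ.continuous (fun t => ContinuousMap.ext fun x => hP _) 1 0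
  have h1 : γ 1 = const X (P x₀) := by ext x; simp [γ]
  have h0 : γ 0 = P := by ext x; simp [γ]
  exact ⟨x₀, h1 ▸ h0 ▸ hγ⟩

/-- Every continuous idempotent matrix-valued function `P` on a compact contractible
metric space `X` is conjugate, via a continuous invertible matrix function `S`, to a
constant diagonal idempotent `diag(I_k, 0)`. -/
theorem continuous_idempotent_conjugate_constant_diag
    (X : Type) [MetricSpace X] [CompactSpace X] [ContractibleSpace X]
    (m : ℕ) (P : X → Matrix (Fin m) (Fin m) ℂ) (hPc : Continuous P)
    (hP : ∀ x, P x * P x = P x) :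
    ∃ S : X → Matrix (Fin m) (Fin m) ℂ, Continuous S ∧ (∀ x, IsUnit (S x).det) ∧
      ∃ k : ℕ, k ≤ m ∧ ∀ x, (S x)⁻¹ * P x * S x = diagIdem m k := by
  -- any submultiplicative norm on matrices makes `C(X, Mₘ(ℂ))` a Banach algebra
  obtain ⟨x₀, hconst⟩ := open scoped Matrix.Norms.Operator in
    ContinuousMap.exists_isConj_const_of_isIdempotentElem ⟨P, hPc⟩ hP
  obtain ⟨k, hkm, hD⟩ := Matrix.exists_isConj_diagIdem (hP x₀)
  obtain ⟨S, hS⟩ := (ContinuousMap.isConj_const hD).trans hconst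
  have hdet (x : X) : IsUnit (S.1 x).det :=
    Matrix.isUnit_det_of_left_inverse congr($(S.inv_mul) x)
  refine ⟨S.1, S.1.continuous, hdet, k, hkm, fun x => ?_⟩
  have hSx : S.1 x * diagIdem m k = P x * S.1 x := congr($(hS.eq) x)
  rw [Matrix.mul_assoc, ← hSx, Matrix.nonsing_inv_mul_cancel_left _ _ (hdet x)]
end

section
/- If f ∈ ∂^{-N}A satisfies inf_{z ∈ 𝔻^n} |f(z)| > 0, then f is invertible in ∂^{-N}A. -/
open scoped BigOperators

/-- The open unit polydisc `𝔻ⁿ ⊆ ℂⁿ`. -/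
def openPolydisc (n : ℕ) : Set (Fin n → ℂ) := { z | ∀ j, ‖z j‖ < 1 }

/-- The closed unit polydisc `cl(𝔻)ⁿ ⊆ ℂⁿ`. -/
def closedPolydisc (n : ℕ) : Set (Fin n → ℂ) := { z | ∀ j, ‖z j‖ ≤ 1 }

/-- Membership in the polydisc algebra `A`: continuous on the closed polydisc and
holomorphic on the open polydisc. -/
def MemA (n : ℕ) (f : (Fin n → ℂ) → ℂ) : Prop :=
  ContinuousOn f (closedPolydisc n) ∧ DifferentiableOn ℂ f (openPolydisc n)

/-- The complex partial derivative with respect to the `j`-th coordinate. -/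
noncomputable def pd {n : ℕ} (j : Fin n) (f : (Fin n → ℂ) → ℂ) : (Fin n → ℂ) → ℂ :=
  fun z => fderiv ℂ f z (Pi.single j 1)

/-- The `m`-fold partial derivative with respect to the `j`-th coordinate. -/
noncomputable def pdPow {n : ℕ} (j : Fin n) : ℕ → ((Fin n → ℂ) → ℂ) → ((Fin n → ℂ) → ℂ)
  | 0 => id
  | m + 1 => fun f => pd j (pdPow j m f)

/-- The mixed partial derivative `∂^{α₁+⋯+αₙ} f / ∂z₁^{α₁} ⋯ ∂zₙ^{αₙ}`. -/
noncomputable def pdMulti {n : ℕ} (α : Fin n → ℕ) (f : (Fin n → ℂ) → ℂ) :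
    (Fin n → ℂ) → ℂ :=
  (List.finRange n).foldr (fun j g => pdPow j (α j) g) f

/-- Membership in `∂^{-N}A`: `f` lies in the polydisc algebra `A` and each of its
complex partial derivatives of total order at most `N` (computed on the open polydisc)
extends to a member of `A`. -/
def MemDN (n N : ℕ) (f : (Fin n → ℂ) → ℂ) : Prop :=
  MemA n f ∧ ∀ α : Fin n → ℕ, (∑ j, α j) ≤ N →
    ∃ g, MemA n g ∧ ∀ z ∈ openPolydisc n, g z = pdMulti α f z

/-!
On the closed polydisc `|f| ≥ ε` by continuity, so `1/f ∈ A`. By the quotient and product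
rules, on `𝔻ⁿ` every derivative `∂^α (1/f)` is a polynomial in `1/f` and the derivatives
`∂^β f` with `|β| ≤ |α|`. For `|α| ≤ N` all of these agree on `𝔻ⁿ` with members of the
algebra `A`, hence so does `∂^α (1/f)`.
-/

open Set

section Polydisc

variable {n : ℕ}

lemma openPolydisc_eq_pi (n : ℕ) :
    openPolydisc n = univ.pi fun _ => Metric.ball (0 : ℂ) 1 := by
  ext z; simp [openPolydisc]

lemma closedPolydisc_eq_pi (n : ℕ) :
    closedPolydisc n = univ.pi fun _ => Metric.closedBall (0 : ℂ) 1 := by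
  ext z; simp [closedPolydisc]

lemma isOpen_openPolydisc (n : ℕ) : IsOpen (openPolydisc n) := by
  rw [openPolydisc_eq_pi]
  exact isOpen_set_pi finite_univ fun _ _ => Metric.isOpen_ball

lemma closure_openPolydisc (n : ℕ) : closure (openPolydisc n) = closedPolydisc n := by
  simp only [openPolydisc_eq_pi, closedPolydisc_eq_pi, closure_pi_set,
    closure_ball (0 : ℂ) one_ne_zero]

lemma openPolydisc_subset_closedPolydisc (n : ℕ) : openPolydisc n ⊆ closedPolydisc n :=
  fun _ hz j => (hz j).le

lemma ne_zero_on_closedPolydisc {f : (Fin n → ℂ) → ℂ} (hf : ContinuousOn f (closedPolydisc n))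
    {ε : ℝ} (hε : 0 < ε) (hbound : ∀ z ∈ openPolydisc n, ε ≤ ‖f z‖) :
    ∀ z ∈ closedPolydisc n, f z ≠ 0 := by
  intro z hz hfz
  have hz' : z ∈ closure (openPolydisc n) := by rwa [closure_openPolydisc]
  have : ε ≤ ‖f z‖ := ContinuousWithinAt.closure_le hz' continuousWithinAt_const
    ((hf z hz).mono (openPolydisc_subset_closedPolydisc n)).norm hbound
  rw [hfz, norm_zero] at this
  linarith

lemma MemA.inv {f : (Fin n → ℂ) → ℂ} (hf : MemA n f) (hne : ∀ z ∈ closedPolydisc n, f z ≠ 0) :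
    MemA n f⁻¹ :=
  ⟨hf.1.inv₀ hne, hf.2.inv fun z hz => hne z (openPolydisc_subset_closedPolydisc n hz)⟩

end Polydisc

section PartialDerivative

variable {n : ℕ} {u v : (Fin n → ℂ) → ℂ} {z : Fin n → ℂ}

lemma pd_congr {s : Set (Fin n → ℂ)} (hs : IsOpen s) (h : EqOn u v s) (j : Fin n) :
    EqOn (pd j u) (pd j v) s := fun z hz => by
  simp only [pd, Filter.EventuallyEq.fderiv_eq (Filter.eventuallyEq_of_mem (hs.mem_nhds hz) h)]

lemma pd_const (c : ℂ) (j : Fin n) : pd j (fun _ => c) z = 0 := by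
  simp [pd]

lemma pd_add (hu : DifferentiableAt ℂ u z) (hv : DifferentiableAt ℂ v z) (j : Fin n) :
    pd j (u + v) z = pd j u z + pd j v z := by
  simp [pd, fderiv_add hu hv]

lemma pd_mul (hu : DifferentiableAt ℂ u z) (hv : DifferentiableAt ℂ v z) (j : Fin n) :
    pd j (u * v) z = u z * pd j v z + v z * pd j u z := by
  simp [pd, fderiv_mul hu hv]

lemma pd_inv (hu : DifferentiableAt ℂ u z) (hz : u z ≠ 0) (j : Fin n) :
    pd j u⁻¹ z = -(pd j u z * (u z)⁻¹ ^ 2) := by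
  have : fderiv ℂ u⁻¹ z = fderiv ℂ (Inv.inv ∘ u) z := rfl
  simp [pd, this, fderiv_comp z (differentiableAt_inv hz) hu, fderiv_inv]

end PartialDerivative

section IteratedPartialDerivative

variable {n : ℕ}

lemma pdMulti_zero (h : (Fin n → ℂ) → ℂ) : pdMulti 0 h = h :=
  List.foldr_fixed' (fun _ => rfl) _

lemma foldr_pdPow_update_succ (β : Fin n → ℕ) (j : Fin n) (h : (Fin n → ℂ) → ℂ)
    {L : List (Fin n)} (hL : L.Pairwise (· < ·)) (hj : j ∈ L)
    (hβ : ∀ i ∈ L, i < j → β i = 0) :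
    L.foldr (fun i g => pdPow i (Function.update β j (β j + 1) i) g) h
      = pd j (L.foldr (fun i g => pdPow i (β i) g) h) := by
  induction L with
  | nil => simp at hj
  | cons i L ih =>
    obtain ⟨hiL, hLtail⟩ := List.pairwise_cons.mp hL
    rcases List.mem_cons.mp hj with rfl | hjL
    · have hupdate : ∀ k ∈ L, Function.update β j (β j + 1) k = β k := fun k hk =>
        Function.update_of_ne (hiL k hk).ne' _ _
      rw [List.foldr_cons, List.foldr_cons, Function.update_self,
        List.foldr_ext _ (fun k g => pdPow k (β k) g) h fun k hk _ => by rw [hupdate k hk]]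
      rfl
    · have hij : i < j := hiL j hjL
      have hβi : β i = 0 := hβ i List.mem_cons_self hij
      simp only [List.foldr_cons, Function.update_of_ne hij.ne, hβi]
      exact ih hLtail hjL fun k hk => hβ k (List.mem_cons_of_mem _ hk)

lemma pdMulti_update_succ (β : Fin n → ℕ) (j : Fin n) (hβ : ∀ i < j, β i = 0)
    (h : (Fin n → ℂ) → ℂ) :
    pdMulti (Function.update β j (β j + 1)) h = pd j (pdMulti β h) :=
  foldr_pdPow_update_succ β j h (List.pairwise_lt_finRange n) (List.mem_finRange j)
    fun i _ => hβ i

lemma pdMulti_single (j : Fin n) (h : (Fin n → ℂ) → ℂ) : pdMulti (Pi.single j 1) h = pd j h := by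
  have hsingle : Pi.single j 1 = Function.update (0 : Fin n → ℕ) j ((0 : Fin n → ℕ) j + 1) :=
    rfl
  rw [hsingle, pdMulti_update_succ 0 j (fun _ _ => rfl), pdMulti_zero]

end IteratedPartialDerivative

section InversePartials

variable {n : ℕ}

lemma sum_update_succ (β : Fin n → ℕ) (j : Fin n) :
    ∑ i, Function.update β j (β j + 1) i = ∑ i, β i + 1 := by
  rw [Finset.sum_update_of_mem (Finset.mem_univ j),
    Finset.sum_eq_add_sum_sdiff_singleton_of_mem (Finset.mem_univ j) β]
  ring

lemma exists_eq_update_succ_of_sum_eq_succ {α : Fin n → ℕ} {m : ℕ} (hα : ∑ i, α i = m + 1) :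
    ∃ j β, (∀ i < j, β i = 0) ∧ ∑ i, β i = m ∧ α = Function.update β j (β j + 1) := by
  obtain ⟨i₀, -, hi₀⟩ := Finset.exists_ne_zero_of_sum_ne_zero (hα.trans_ne m.succ_ne_zero)
  obtain ⟨j, hj, hmin⟩ := wellFounded_lt.has_min {i | α i ≠ 0} ⟨i₀, hi₀⟩
  have hα_eq : α = Function.update (Function.update α j (α j - 1)) j (α j - 1 + 1) := by
    rw [Function.update_idem, Nat.sub_add_cancel (Nat.pos_of_ne_zero hj), Function.update_eq_self]
  refine ⟨j, Function.update α j (α j - 1), fun i hi => ?_, ?_, ?_⟩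
  · rw [Function.update_of_ne hi.ne]
    exact not_not.mp fun h => hmin i h hi
  · have := sum_update_succ (Function.update α j (α j - 1)) j
    simp only [Function.update_self, ← hα_eq] at this
    omega
  · simpa using hα_eq

variable (f : (Fin n → ℂ) → ℂ)

def partialsUpTo (k j₀ : ℕ) : Set ((Fin n → ℂ) → ℂ) :=
  {u | ∃ β : Fin n → ℕ, ∑ i, β i ≤ k ∧ (∀ i : Fin n, (i : ℕ) < j₀ → β i = 0) ∧ pdMulti β f = u}

/-- Only coordinates `≥ j₀` are differentiated: `pdMulti` differentiates in the order of the
coordinates, so `pd j (pdMulti β f)` is again of the form `pdMulti β' f` only when `β` vanishes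
below `j`. -/
def invPartialAlgebra (k j₀ : ℕ) : Subalgebra ℂ ((Fin n → ℂ) → ℂ) :=
  Algebra.adjoin ℂ (insert f⁻¹ (partialsUpTo f k j₀))

variable {f}

lemma invPartialAlgebra_mono {k k' j₀ j₀' : ℕ} (hk : k ≤ k') (hj : j₀' ≤ j₀) :
    invPartialAlgebra f k j₀ ≤ invPartialAlgebra f k' j₀' := by
  refine Algebra.adjoin_mono (insert_subset_insert ?_)
  rintro _ ⟨β, hβk, hβj, rfl⟩
  exact ⟨β, hβk.trans hk, fun i hi => hβj i (hi.trans_le hj), rfl⟩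

variable {U : Set (Fin n → ℂ)} {k : ℕ}

lemma differentiableOn_of_mem_invPartialAlgebra
    (hdiff : ∀ β : Fin n → ℕ, ∑ i, β i ≤ k → DifferentiableOn ℂ (pdMulti β f) U)
    (hne : ∀ z ∈ U, f z ≠ 0) {j₀ : ℕ} {u : (Fin n → ℂ) → ℂ}
    (hu : u ∈ invPartialAlgebra f k j₀) : DifferentiableOn ℂ u U := by
  induction hu using Algebra.adjoin_induction with
  | mem u hu =>
    obtain rfl | ⟨β, hβ, -, rfl⟩ := hu
    · have hf : DifferentiableOn ℂ f U := by simpa [pdMulti_zero] using hdiff 0 (by simp)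
      exact hf.inv hne
    · exact hdiff β hβ
  | algebraMap r => exact differentiableOn_const r
  | add u v _ _ hu hv => exact hu.add hv
  | mul u v _ _ hu hv => exact hu.mul hv

lemma exists_eqOn_pd_mem_invPartialAlgebra (hU : IsOpen U)
    (hdiff : ∀ β : Fin n → ℕ, ∑ i, β i ≤ k → DifferentiableOn ℂ (pdMulti β f) U)
    (hne : ∀ z ∈ U, f z ≠ 0) {j₀ : ℕ} {j : Fin n} (hj : (j : ℕ) ≤ j₀) {u : (Fin n → ℂ) → ℂ}
    (hu : u ∈ invPartialAlgebra f k j₀) :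
    ∃ v ∈ invPartialAlgebra f (k + 1) j, EqOn (pd j u) v U := by
  have hdiffAt {w} (hw : w ∈ invPartialAlgebra f k j₀) {z} (hz : z ∈ U) :
      DifferentiableAt ℂ w z :=
    (differentiableOn_of_mem_invPartialAlgebra hdiff hne hw).differentiableAt (hU.mem_nhds hz)
  have hle : invPartialAlgebra f k j₀ ≤ invPartialAlgebra f (k + 1) j :=
    invPartialAlgebra_mono k.le_succ hj
  induction hu using Algebra.adjoin_induction with
  | mem u hu =>
    obtain rfl | ⟨β, hβk, hβj, rfl⟩ := hu
    · have hpd : pdMulti (Pi.single j 1) f ∈ partialsUpTo f (k + 1) j :=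
        ⟨Pi.single j 1, by simp, fun i hi => Pi.single_eq_of_ne (Fin.ne_of_lt hi) _, rfl⟩
      refine ⟨-(pdMulti (Pi.single j 1) f * f⁻¹ ^ 2), ?_, fun z hz => ?_⟩
      · exact neg_mem (mul_mem (Algebra.subset_adjoin (mem_insert_of_mem _ hpd))
          (pow_mem (Algebra.subset_adjoin (mem_insert _ _)) 2))
      · have hf : DifferentiableOn ℂ f U := by simpa [pdMulti_zero] using hdiff 0 (by simp)
        simp [pd_inv (hf.differentiableAt (hU.mem_nhds hz)) (hne z hz), pdMulti_single]
    · have hβ : ∀ i < j, β i = 0 := fun i hi => hβj i (lt_of_lt_of_le hi hj)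
      refine ⟨pdMulti (Function.update β j (β j + 1)) f, Algebra.subset_adjoin
        (mem_insert_of_mem _ ⟨_, ?_, fun i hi => ?_, rfl⟩), fun z _ => ?_⟩
      · rw [sum_update_succ]
        omega
      · rw [Function.update_of_ne (Fin.ne_of_lt hi)]
        exact hβ i hi
      · rw [pdMulti_update_succ β j hβ]
  | algebraMap r =>
    exact ⟨0, zero_mem _, fun z _ => pd_const r j⟩
  | add u v hu hv ihu ihv =>
    obtain ⟨u', hu', hpdu⟩ := ihu
    obtain ⟨v', hv', hpdv⟩ := ihv
    exact ⟨u' + v', add_mem hu' hv', fun z hz => by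
      simp only [pd_add (hdiffAt hu hz) (hdiffAt hv hz), hpdu hz, hpdv hz, Pi.add_apply]⟩
  | mul u v hu hv ihu ihv =>
    obtain ⟨u', hu', hpdu⟩ := ihu
    obtain ⟨v', hv', hpdv⟩ := ihv
    exact ⟨u * v' + v * u', add_mem (mul_mem (hle hu) hv') (mul_mem (hle hv) hu'), fun z hz => by
      simp only [pd_mul (hdiffAt hu hz) (hdiffAt hv hz), hpdu hz, hpdv hz, Pi.add_apply,
        Pi.mul_apply]⟩

lemma exists_eqOn_pdMulti_inv (hU : IsOpen U) (hne : ∀ z ∈ U, f z ≠ 0) (α : Fin n → ℕ)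
    (hdiff : ∀ β : Fin n → ℕ, ∑ i, β i < ∑ i, α i → DifferentiableOn ℂ (pdMulti β f) U)
    {j₀ : ℕ} (hα : ∀ i : Fin n, (i : ℕ) < j₀ → α i = 0) :
    ∃ v ∈ invPartialAlgebra f (∑ i, α i) j₀, EqOn (pdMulti α f⁻¹) v U := by
  induction hm : ∑ i, α i generalizing α j₀ with
  | zero =>
    obtain rfl : α = 0 := funext fun i => Finset.sum_eq_zero_iff.mp hm i (Finset.mem_univ i)
    exact ⟨f⁻¹, Algebra.subset_adjoin (mem_insert _ _), by rw [pdMulti_zero]; exact eqOn_refl _ _⟩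
  | succ m ih =>
    obtain ⟨j, β, hβ, hβm, rfl⟩ := exists_eq_update_succ_of_sum_eq_succ hm
    rw [sum_update_succ, hβm] at hdiff
    have hj₀ : j₀ ≤ j := not_lt.mp fun h => by simpa using hα j h
    obtain ⟨v', hv', hpdv'⟩ := ih β (fun γ hγ => hdiff γ (by omega)) hβ hβm
    obtain ⟨v, hv, hpdv⟩ := exists_eqOn_pd_mem_invPartialAlgebra hU
      (fun γ hγ => hdiff γ (Nat.lt_succ_of_le hγ)) hne le_rfl hv'
    refine ⟨v, invPartialAlgebra_mono le_rfl hj₀ hv, fun z hz => ?_⟩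
    rw [pdMulti_update_succ β j hβ, pd_congr hU hpdv' j hz, hpdv hz]

end InversePartials

section RestrictionAlgebra

variable {n N : ℕ} {f : (Fin n → ℂ) → ℂ}

def restrictA (n : ℕ) : Subalgebra ℂ ((Fin n → ℂ) → ℂ) where
  carrier := {u | ∃ g, MemA n g ∧ EqOn g u (openPolydisc n)}
  mul_mem' := by
    rintro _ _ ⟨g, hg, hgu⟩ ⟨g', hg', hgv⟩
    exact ⟨g * g', ⟨hg.1.mul hg'.1, hg.2.mul hg'.2⟩, fun z hz => by simp [hgu hz, hgv hz]⟩
  add_mem' := by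
    rintro _ _ ⟨g, hg, hgu⟩ ⟨g', hg', hgv⟩
    exact ⟨g + g', ⟨hg.1.add hg'.1, hg.2.add hg'.2⟩, fun z hz => by simp [hgu hz, hgv hz]⟩
  algebraMap_mem' r := ⟨fun _ => r, ⟨continuousOn_const, differentiableOn_const r⟩, fun _ _ => rfl⟩

lemma differentiableOn_of_mem_restrictA {u : (Fin n → ℂ) → ℂ} (hu : u ∈ restrictA n) :
    DifferentiableOn ℂ u (openPolydisc n) :=
  let ⟨_, hg, hgu⟩ := hu
  hg.2.congr fun _ hz => (hgu hz).symm

lemma MemDN.pdMulti_mem_restrictA (hf : MemDN n N f) {β : Fin n → ℕ} (hβ : ∑ i, β i ≤ N) :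
    pdMulti β f ∈ restrictA n :=
  let ⟨g, hg, hgβ⟩ := hf.2 β hβ
  ⟨g, hg, hgβ⟩

lemma MemDN.invPartialAlgebra_le_restrictA (hf : MemDN n N f) (hinv : MemA n f⁻¹) {k j₀ : ℕ}
    (hk : k ≤ N) : invPartialAlgebra f k j₀ ≤ restrictA n := by
  refine Algebra.adjoin_le (insert_subset ⟨f⁻¹, hinv, eqOn_refl _ _⟩ ?_)
  rintro _ ⟨β, hβ, -, rfl⟩
  exact hf.pdMulti_mem_restrictA (hβ.trans hk)

end RestrictionAlgebra

theorem memDN_inverse_of_inf_pos_general (n N : ℕ)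
    (f : (Fin n → ℂ) → ℂ) (hf : MemDN n N f)
    (hinf : ∃ ε > (0 : ℝ), ∀ z ∈ openPolydisc n, ε ≤ ‖f z‖) :
    ∃ g, MemDN n N g ∧ ∀ z ∈ closedPolydisc n, f z * g z = 1 := by
  obtain ⟨ε, hε, hbound⟩ := hinf
  have hne := ne_zero_on_closedPolydisc hf.1.1 hε hbound
  have hinv : MemA n f⁻¹ := hf.1.inv hne
  refine ⟨f⁻¹, ⟨hinv, fun α hα => ?_⟩, fun z hz => mul_inv_cancel₀ (hne z hz)⟩
  obtain ⟨v, hv, hαv⟩ := exists_eqOn_pdMulti_inv (isOpen_openPolydisc n)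
    (fun z hz => hne z (openPolydisc_subset_closedPolydisc n hz)) α
    (fun β hβ => differentiableOn_of_mem_restrictA (hf.pdMulti_mem_restrictA (hβ.le.trans hα)))
    (j₀ := 0) (fun _ h => (Nat.not_lt_zero _ h).elim)
  obtain ⟨g, hg, hgv⟩ := hf.invPartialAlgebra_le_restrictA hinv hα hv
  exact ⟨g, hg, fun z hz => (hgv hz).trans (hαv hz).symm⟩

/-- If `f ∈ ∂^{-N}A` satisfies `inf_{z ∈ 𝔻ⁿ} |f z| > 0`, then `f` is invertible in
`∂^{-N}A`. -/
theorem memDN_inverse_of_inf_pos (n N : ℕ) (hN : 0 < N)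
    (f : (Fin n → ℂ) → ℂ) (hf : MemDN n N f)
    (hinf : ∃ ε > (0 : ℝ), ∀ z ∈ openPolydisc n, ε ≤ ‖f z‖) :
    ∃ g, MemDN n N g ∧ ∀ z ∈ closedPolydisc n, f z * g z = 1 :=
  memDN_inverse_of_inf_pos_general n N f hf hinf
end

section
/- If U(0) ∈ ℂ^{k×k} is invertible with U(0)·conj(U(0)) = I, and log U(0) = X + iY with X, Y real matrices obtained by the holomorphic functional calculus (so XY = YX), then e^{2X} = I. -/
/-!
Entrywise conjugation is a continuous ring homomorphism, so it commutes with the matrix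
exponential: `conj U₀ = exp (X - iY)`. As `X + iY` and `X - iY` commute,
`U₀ * conj U₀ = exp (2X)`, computed over `ℂ`; and a real matrix is determined by its image in
the complex matrices.
-/

open NormedSpace

theorem Matrix.exp_map {m R S : Type*} [Fintype m] [DecidableEq m]
    [NormedRing R] [NormedAlgebra ℚ R] [CompleteSpace R]
    [NormedRing S] [NormedAlgebra ℚ S] [CompleteSpace S]
    (f : R →+* S) (hf : Continuous f) (A : Matrix m m R) :
    exp (A.map f) = (exp A).map f := by
  open scoped Matrix.Norms.Operator in
  · -- instance search misses this: the operator-norm uniformity is the product one only up to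
    -- unfolding
    have : @CompleteSpace (Matrix m m R) PseudoMetricSpace.toUniformSpace :=
      Matrix.instCompleteSpace m m R
    exact (map_exp f.mapMatrix (continuous_id.matrix_map hf) A).symm

theorem Commute.add_sub_self {R : Type*} [Ring R] {a b : R} (h : Commute a b) :
    Commute (a + b) (a - b) :=
  ((Commute.refl a).sub_right h).add_left (h.symm.sub_right (Commute.refl b))

theorem exp_two_X_eq_one_general (k : ℕ) (U₀ : Matrix (Fin k) (Fin k) ℂ)
    (h : U₀ * U₀.map (starRingEnd ℂ) = 1)
    (X Y : Matrix (Fin k) (Fin k) ℝ) (hcomm : X * Y = Y * X)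
    (hlog : U₀ = exp (X.map (Complex.ofReal ·) + Complex.I • Y.map (Complex.ofReal ·))) :
    exp ((2 : ℝ) • X) = 1 := by
  set X' := X.map ((↑) : ℝ → ℂ)
  set W := Complex.I • Y.map ((↑) : ℝ → ℂ)
  have hconj : U₀.map (starRingEnd ℂ) = exp (X' - W) := by
    rw [hlog, ← Matrix.exp_map _ Complex.continuous_conj]
    congr 1
    ext
    simp [X', W, sub_eq_add_neg]
  have hXW : Commute X' W :=
    (show Commute X Y from hcomm).map Complex.ofRealHom.mapMatrix |>.smul_right _
  apply Matrix.map_injective Complex.ofReal_injective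
  calc (exp ((2 : ℝ) • X)).map Complex.ofRealHom
      = exp (((2 : ℝ) • X).map Complex.ofRealHom) :=
        (Matrix.exp_map _ Complex.continuous_ofReal _).symm
    _ = exp ((X' + W) + (X' - W)) := by congr 1; ext; simp [X']; ring
    _ = U₀ * U₀.map (starRingEnd ℂ) := by
        rw [Matrix.exp_add_of_commute _ _ hXW.add_sub_self, hconj, hlog]
    _ = (1 : Matrix (Fin k) (Fin k) ℝ).map (↑) := by rw [h, Matrix.map_one] <;> simp

/-- If `U₀ ∈ ℂ^{k×k}` is invertible with `U₀ ⬝ conj U₀ = I` and `log U₀ = X + iY` with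
`X`, `Y` real commuting matrices (so `U₀ = e^{X + iY}` with `XY = YX`), then
`e^{2X} = I`. -/
theorem exp_two_X_eq_one (k : ℕ) (U₀ : Matrix (Fin k) (Fin k) ℂ)
    (hU : IsUnit U₀.det) (h : U₀ * U₀.map (starRingEnd ℂ) = 1)
    (X Y : Matrix (Fin k) (Fin k) ℝ) (hcomm : X * Y = Y * X)
    (hlog : U₀ = exp (X.map (Complex.ofReal ·) + Complex.I • Y.map (Complex.ofReal ·))) :
    exp ((2 : ℝ) • X) = 1 :=
  exp_two_X_eq_one_general k U₀ h X Y hcomm hlog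
end
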